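/- For every natural number n ≥ 2 and every natural number m, there is no injective group homomorphism from Aut(ℂⁿ) to GL_m(ℂ); that is, the group Aut(ℂⁿ) of polynomial automorphisms of ℂⁿ is not linear. -/

import Mathlib

/-!
Let `a j` be the shear `x₁ ↦ x₁ + x₀ ^ 2 ^ j` and `b k` the scaling `x₀ ↦ ζ x₀` by a primitive
`2 ^ (k + 1)`-th root of unity `ζ`. Then `b k` commutes with `a j` iff `2 ^ (k + 1) ∣ 2 ^ j`,
i.e. iff `k < j`. No linear group contains such a configuration: in a finite-dimensional algebra
the centralizers of the tails `{a j | k ≤ j}` grow with `k`, strictly so because `b k` lies in the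
`(k + 1)`-st but not in the `k`-th, which contradicts the ascending chain condition.
-/

open scoped MatrixGroups

noncomputable section

/-- The group `Aut(ℂⁿ)` of polynomial automorphisms of `ℂⁿ`, identified with the group of
`ℂ`-algebra automorphisms of the polynomial ring `ℂ[x₁,…,xₙ]`. -/
abbrev PolyAutN (n : ℕ) : Type :=
  MvPolynomial (Fin n) ℂ ≃ₐ[ℂ] MvPolynomial (Fin n) ℂ

open Set in
theorem exists_commute_of_commute_of_lt (K : Type*) {R : Type*} [CommSemiring K] [Semiring R]
    [Algebra K R] [IsNoetherian K R] (a b : ℕ → R)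
    (h : ∀ k j, k < j → Commute (b k) (a j)) : ∃ k, Commute (b k) (a k) := by
  by_contra! hnc
  let V (k : ℕ) := Subalgebra.toSubmodule (Subalgebra.centralizer K (a '' Ici k))
  have hb (k : ℕ) : b k ∈ V (k + 1) := by
    simp only [V, Subalgebra.mem_toSubmodule, Subalgebra.mem_centralizer_iff, forall_mem_image]
    exact fun j hj => (h k j hj).eq.symm
  refine not_strictMono_of_wellFoundedGT V (strictMono_nat_of_lt_succ fun k => ?_)
  refine lt_of_le_of_ne (Subalgebra.centralizer_le K _ _ (image_mono (Ici_subset_Ici.2 k.le_succ)))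
    fun heq => hnc k ?_
  have hbk : b k ∈ V k := heq ▸ hb k
  exact ((Subalgebra.mem_centralizer_iff K).1 hbk _ ⟨k, self_mem_Ici, rfl⟩).symm

theorem not_injective_of_commute_of_lt (K : Type*) {R G : Type*} [CommSemiring K] [Semiring R]
    [Algebra K R] [IsNoetherian K R] [Monoid G] (ρ : G →* Rˣ) (a b : ℕ → G)
    (hlt : ∀ k j, k < j → Commute (b k) (a j)) (hself : ∀ k, ¬ Commute (b k) (a k)) :
    ¬ Function.Injective ρ := by
  intro hρ
  obtain ⟨k, hk⟩ := exists_commute_of_commute_of_lt K (fun j => (ρ (a j) : R))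
    (fun k => ρ (b k)) fun k j hkj => ((hlt k j hkj).map ρ).units_val
  refine hself k (hρ ?_)
  rw [map_mul, map_mul]
  exact hk.units_of_val.eq

namespace MvPolynomial

section CommSemiring

variable {σ R : Type*} [CommSemiring R]

theorem algEquiv_ext_X {A : Type*} [Semiring A] [Algebra R A] {e f : MvPolynomial σ R ≃ₐ[R] A}
    (h : ∀ i, e (X i) = f (X i)) : e = f :=
  AlgEquiv.coe_toAlgHom_injective (algHom_ext h)

def scaleHom (u : σ → R) : MvPolynomial σ R →ₐ[R] MvPolynomial σ R :=
  aeval fun i => C (u i) * X i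

@[simp]
theorem scaleHom_X (u : σ → R) (i : σ) : scaleHom u (X i) = C (u i) * X i :=
  aeval_X _ _

theorem scaleHom_comp (u v : σ → R) : (scaleHom u).comp (scaleHom v) = scaleHom (u * v) := by
  ext i
  simp [mul_left_comm, mul_comm]

theorem scaleHom_one : scaleHom (1 : σ → R) = AlgHom.id R _ := by
  ext i
  simp

theorem scaleHom_comp_inv (u : σ → Rˣ) :
    (scaleHom fun i => (u i : R)).comp (scaleHom fun i => ↑(u i)⁻¹) = AlgHom.id R _ := by
  rw [scaleHom_comp, ← scaleHom_one]
  congr 1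
  ext i
  simp

def scale (u : σ → Rˣ) : MvPolynomial σ R ≃ₐ[R] MvPolynomial σ R :=
  .ofAlgHom (scaleHom fun i => u i) (scaleHom fun i => ↑(u i)⁻¹) (scaleHom_comp_inv u)
    (by simpa using scaleHom_comp_inv u⁻¹)

@[simp]
theorem scale_X (u : σ → Rˣ) (i : σ) : scale u (X i) = C (u i : R) * X i :=
  scaleHom_X _ _

variable [DecidableEq σ]

def shearHom (i j : σ) (c : R) (N : ℕ) : MvPolynomial σ R →ₐ[R] MvPolynomial σ R :=
  aeval (Function.update X j (X j + C c * X i ^ N))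

theorem shearHom_X (i j : σ) (c : R) (N : ℕ) (k : σ) :
    shearHom i j c N (X k) = if k = j then X j + C c * X i ^ N else X k := by
  simp [shearHom, Function.update_apply]

theorem shearHom_comp {i j : σ} (hij : i ≠ j) (c d : R) (N : ℕ) :
    (shearHom i j c N).comp (shearHom i j d N) = shearHom i j (c + d) N := by
  refine algHom_ext fun k => ?_
  by_cases hk : k = j
  · simp [shearHom_X, hk, hij]
    ring
  · simp [shearHom_X, hk]

theorem shearHom_zero (i j : σ) (N : ℕ) : shearHom i j (0 : R) N = AlgHom.id R _ := by
  refine algHom_ext fun k => ?_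
  by_cases hk : k = j <;> simp [shearHom_X, hk]

end CommSemiring

section CommRing

variable {σ R : Type*} [CommRing R] [DecidableEq σ] {i j : σ}

def shear (hij : i ≠ j) (c : R) (N : ℕ) : MvPolynomial σ R ≃ₐ[R] MvPolynomial σ R :=
  .ofAlgHom (shearHom i j c N) (shearHom i j (-c) N)
    (by rw [shearHom_comp hij, add_neg_cancel, shearHom_zero])
    (by rw [shearHom_comp hij, neg_add_cancel, shearHom_zero])

theorem shear_X (hij : i ≠ j) (c : R) (N : ℕ) (k : σ) :
    shear hij c N (X k) = if k = j then X j + C c * X i ^ N else X k :=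
  shearHom_X i j c N k

theorem scale_shear_X_self (hij : i ≠ j) (u : σ → Rˣ) (c : R) (N : ℕ) :
    scale u (shear hij c N (X j)) = C (u j : R) * X j + C (c * u i ^ N) * X i ^ N := by
  rw [shear_X, if_pos rfl, map_add, map_mul, map_pow, scale_X, scale_X, ← algebraMap_eq,
    AlgEquiv.commutes, algebraMap_eq, mul_pow, ← C_pow, C_mul, mul_assoc]

theorem shear_scale_X_self (hij : i ≠ j) (u : σ → Rˣ) (c : R) (N : ℕ) :
    shear hij c N (scale u (X j)) = C (u j : R) * (X j + C c * X i ^ N) := by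
  rw [scale_X, map_mul, shear_X, if_pos rfl, ← algebraMap_eq, AlgEquiv.commutes]

theorem commute_scale_shear_iff (hij : i ≠ j) (u : σ → Rˣ) (hu : u j = 1) (N : ℕ) :
    Commute (scale u) (shear hij 1 N) ↔ u i ^ N = 1 := by
  constructor
  · intro h
    have hXj := DFunLike.congr_fun h.eq (X j)
    rw [AlgEquiv.mul_apply, AlgEquiv.mul_apply, scale_shear_X_self, shear_scale_X_self, hu] at hXj
    simp only [Units.val_one, C_1, one_mul, add_right_inj,
      (isRegular_X_pow (n := i) N).right.mul_right_eq_self_iff] at hXj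
    rw [← C_1, C_inj] at hXj
    exact Units.ext (by simpa using hXj)
  · intro h
    refine algEquiv_ext_X fun k => ?_
    rw [AlgEquiv.mul_apply, AlgEquiv.mul_apply]
    by_cases hk : k = j
    · rw [hk, scale_shear_X_self, shear_scale_X_self, hu, ← Units.val_pow_eq_pow_val, h]
      simp
    · rw [shear_X, if_neg hk, scale_X, map_mul, shear_X, if_neg hk, ← algebraMap_eq,
        AlgEquiv.commutes]

end CommRing

end MvPolynomial

open MvPolynomial in
/-- STATEMENT 9: for `n ≥ 2`, the group `Aut(ℂⁿ)` is not linear: there is no injective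
group homomorphism `Aut(ℂⁿ) → GL_m(ℂ)`. -/
theorem autCn_not_linear (n m : ℕ) (hn : 2 ≤ n) (ρ : PolyAutN n →* GL (Fin m) ℂ) :
    ¬ Function.Injective ρ := by
  have h01 : (⟨0, by omega⟩ : Fin n) ≠ ⟨1, by omega⟩ := by simp
  obtain ⟨ζ, hζ⟩ : ∃ ζ : ℕ → ℂˣ, ∀ k, IsPrimitiveRoot (ζ k) (2 ^ (k + 1)) :=
    ⟨_, fun k => (Complex.isPrimitiveRoot_exp _ (by simp)).isUnit_unit (by simp)⟩
  have hcomm (k j : ℕ) :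
      Commute (scale (Pi.mulSingle ⟨0, by omega⟩ (ζ k))) (shear h01 1 (2 ^ j)) ↔ k < j := by
    rw [commute_scale_shear_iff h01 _ (Pi.mulSingle_eq_of_ne h01.symm _), Pi.mulSingle_eq_same,
      (hζ k).pow_eq_one_iff_dvd, Nat.pow_dvd_pow_iff_le_right (by norm_num)]
    omega
  exact not_injective_of_commute_of_lt ℂ ρ _ _ (fun k j => (hcomm k j).2) fun k => by simp [hcomm]

end
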